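/- arXiv:2208.01458 — 2 statements merged into one kernel-verified Lean document; each statement's English description precedes it below -/
import Mathlib

section
/- Let f : ℝ² → ℝ be C¹ on the closed exterior half-region Ω₀ = {(r,θ) : r > r₀, 0 < θ < π} (in polar coordinates, r₀ > 0) with finite Dirichlet integral ∫_{Ω₀} |∇f|² dx dy < ∞. Then (1/log r) ∫₀^π f(r,θ)² dθ → 0 as r → ∞. -/
/-!
Along a ray, `f (r, θ) - f (s, θ) = ∫ₛʳ ∂ᵣf (t, θ) dt`, and Cauchy–Schwarz against the weights
`t` and `1 / t` gives `(f (r, θ) - f (s, θ))² ≤ log (r / s) ∫ₛʳ (∂ᵣf)² t dt`. Integrating in `θ`,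
`∫ f (r, ·)² ≤ 2 ∫ f (s, ·)² + 2 log (r / s) · (Dirichlet integral over r > s)`. Dividing by
`log r` and choosing `s` so large that the tail of the Dirichlet integral is small gives the claim.
-/

open MeasureTheory Real Filter Set Topology

theorem integral_sq_le_log_div_mul_integral_sq_mul {a b : ℝ} (ha : 0 < a) (hab : a ≤ b)
    {u : ℝ → ℝ} (hu : ContinuousOn u (Icc a b)) :
    (∫ t in a..b, u t) ^ 2 ≤ log (b / a) * ∫ t in a..b, u t ^ 2 * t := by
  have hpos : ∀ t ∈ uIcc a b, 0 < t := fun t ht => ha.trans_le (uIcc_of_le hab ▸ ht).1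
  rw [← uIcc_of_le hab] at hu
  have hu₁ : IntervalIntegrable u volume a b := hu.intervalIntegrable
  have hu₂ : IntervalIntegrable (fun t => u t ^ 2 * t) volume a b :=
    ((hu.pow 2).mul continuousOn_id).intervalIntegrable
  have hinv : IntervalIntegrable (fun t => 1 / t) volume a b :=
    (continuousOn_const.div continuousOn_id fun t ht => (hpos t ht).ne').intervalIntegrable
  have hlog : ∫ t in a..b, 1 / t = log (b / a) :=
    integral_one_div fun h => (hpos 0 h).false
  -- `∫ (x u t - 1)² / t ≥ 0` is a quadratic in `x` whose discriminant is the defect.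
  have hquad : ∀ x : ℝ, 0 ≤ (∫ t in a..b, u t ^ 2 * t) * (x * x)
      + (-2 * ∫ t in a..b, u t) * x + log (b / a) := by
    intro x
    have hexpand : ∫ t in a..b, (x * (u t * t) - 1) ^ 2 / t
        = ∫ t in a..b, (x * x * (u t ^ 2 * t) + -2 * x * u t + 1 / t) :=
      intervalIntegral.integral_congr fun t ht => by
        have := (hpos t ht).ne'
        field_simp
        ring
    rw [intervalIntegral.integral_add ((hu₂.const_mul _).add (hu₁.const_mul _)) hinv,
      intervalIntegral.integral_add (hu₂.const_mul _) (hu₁.const_mul _),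
      intervalIntegral.integral_const_mul, intervalIntegral.integral_const_mul, hlog]
      at hexpand
    have hnonneg : 0 ≤ ∫ t in a..b, (x * (u t * t) - 1) ^ 2 / t :=
      intervalIntegral.integral_nonneg hab fun t ht =>
        div_nonneg (sq_nonneg _) (hpos t (uIcc_of_le hab ▸ ht)).le
    linarith
  have := discrim_le_zero hquad
  rw [discrim] at this
  linarith

theorem sq_le_two_mul_sq_add_log_div_mul_integral {a b c : ℝ} {u : ℝ → ℝ} (ha : 0 ≤ a)
    (hab : a < b) (hbc : b ≤ c) (hu : ContDiffOn ℝ 1 u (Ioi a)) :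
    u c ^ 2 ≤ 2 * u b ^ 2 + 2 * log (c / b) * ∫ t in b..c, deriv u t ^ 2 * t := by
  have hsub : uIcc b c ⊆ Ioi a := fun t ht => hab.trans_le (uIcc_of_le hbc ▸ ht).1
  have hderiv : ContinuousOn (deriv u) (uIcc b c) :=
    (hu.continuousOn_deriv_of_isOpen isOpen_Ioi le_rfl).mono hsub
  have hftc : ∫ t in b..c, deriv u t = u c - u b :=
    intervalIntegral.integral_deriv_eq_sub
      (fun t ht => (hu.differentiableOn one_ne_zero t (hsub ht)).differentiableAt
        (isOpen_Ioi.mem_nhds (hsub ht)))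
      hderiv.intervalIntegrable
  have hcs := integral_sq_le_log_div_mul_integral_sq_mul (ha.trans_lt hab) hbc
    (uIcc_of_le hbc ▸ hderiv)
  rw [hftc] at hcs
  nlinarith [sq_nonneg (u c - 2 * u b)]

namespace MeasureTheory

variable {α β E : Type*} [MeasurableSpace α] [MeasurableSpace β] {μ : Measure α}
  {ν : Measure β} [SFinite μ] [SFinite ν] [NormedAddCommGroup E]
  {F : α × β → E} {s : Set α} {t : Set β}

theorem IntegrableOn.ae_integrableOn_left (hF : IntegrableOn F (s ×ˢ t) (μ.prod ν)) :
    ∀ᵐ y ∂ν.restrict t, IntegrableOn (fun x => F (x, y)) s μ := by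
  rw [IntegrableOn, ← Measure.prod_restrict] at hF
  exact hF.prod_left_ae

variable [NormedSpace ℝ E]

theorem IntegrableOn.integrableOn_setIntegral_left
    (hF : IntegrableOn F (s ×ˢ t) (μ.prod ν)) :
    IntegrableOn (fun y => ∫ x in s, F (x, y) ∂μ) t ν := by
  rw [IntegrableOn, ← Measure.prod_restrict] at hF
  exact hF.integral_prod_right

theorem setIntegral_prod_symm (hF : IntegrableOn F (s ×ˢ t) (μ.prod ν)) :
    ∫ z in s ×ˢ t, F z ∂μ.prod ν = ∫ y in t, ∫ x in s, F (x, y) ∂μ ∂ν := by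
  rw [IntegrableOn, ← Measure.prod_restrict] at hF
  rw [← Measure.prod_restrict, integral_prod_symm F hF]

end MeasureTheory

theorem tendsto_setIntegral_Ioi_prod_nhds_zero {β E : Type*} [MeasurableSpace β]
    [NormedAddCommGroup E] [NormedSpace ℝ E] {μ : Measure (ℝ × β)} {F : ℝ × β → E} {a : ℝ}
    {S : Set β} (hS : MeasurableSet S) (hF : IntegrableOn F (Ioi a ×ˢ S) μ) :
    Tendsto (fun s => ∫ p in Ioi s ×ˢ S, F p ∂μ) atTop (𝓝 0) := by
  have h := tendsto_setIntegral_of_antitone (fun s => measurableSet_Ioi.prod hS)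
    (fun s t hst => prod_mono (Ioi_subset_Ioi hst) le_rfl) ⟨a, hF⟩
  have hempty : (⋂ s : ℝ, Ioi s ×ˢ S) = ∅ :=
    eq_empty_of_forall_notMem fun p hp => lt_irrefl p.1 (mem_iInter.1 hp p.1).1
  rwa [hempty, Measure.restrict_empty, integral_zero_measure] at h

theorem tendsto_one_div_log_mul_of_le {φ A T : ℝ → ℝ} (hφ : ∀ᶠ r in atTop, 0 ≤ φ r)
    (hT : Tendsto T atTop (𝓝 0))
    (hle : ∀ᶠ s in atTop, ∀ᶠ r in atTop, φ r ≤ A s + log (r / s) * T s) :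
    Tendsto (fun r => 1 / log r * φ r) atTop (𝓝 0) := by
  have hlog := tendsto_log_atTop.eventually_gt_atTop 0
  refine tendsto_order.2 ⟨fun ε hε => ?_, fun ε hε => ?_⟩
  · filter_upwards [hφ, hlog] with r hφr hlogr
    exact hε.trans_le (by positivity)
  · have hTε := hT.eventually (eventually_lt_nhds (half_pos hε))
    obtain ⟨s, hs, hs₁, hTs⟩ := (hle.and ((eventually_ge_atTop 1).and hTε)).exists
    filter_upwards [hs, eventually_ge_atTop s, hlog,
      tendsto_log_atTop.eventually_gt_atTop (2 * A s / ε)] with r hr hsr hlogr hlogA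
    rw [one_div, inv_mul_lt_iff₀ hlogr]
    have hlog_div : 0 ≤ log (r / s) := log_nonneg ((one_le_div (by linarith)).2 hsr)
    have hlog_div_le : log (r / s) ≤ log r := by
      rw [log_div (by linarith) (by linarith)]
      linarith [log_nonneg hs₁]
    have hA : A s < log r * (ε / 2) := by
      rw [div_lt_iff₀ hε] at hlogA
      linarith
    calc φ r ≤ A s + log (r / s) * T s := hr
      _ ≤ A s + log (r / s) * (ε / 2) := by gcongr
      _ ≤ A s + log r * (ε / 2) := by gcongr
      _ < log r * ε := by linarith

noncomputable def polarDirichletDensity (f : ℝ × ℝ → ℝ) (q : ℝ × ℝ) : ℝ :=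
  ((deriv (fun r => f (r, q.2)) q.1) ^ 2 + (deriv (fun θ => f (q.1, θ)) q.2) ^ 2 / q.1 ^ 2) * q.1

theorem deriv_fst_sq_mul_le_polarDirichletDensity (f : ℝ × ℝ → ℝ) {q : ℝ × ℝ} (hq : 0 ≤ q.1) :
    deriv (fun r => f (r, q.2)) q.1 ^ 2 * q.1 ≤ polarDirichletDensity f q := by
  unfold polarDirichletDensity
  gcongr
  exact le_add_of_nonneg_right (by positivity)

theorem polarDirichletDensity_nonneg (f : ℝ × ℝ → ℝ) {q : ℝ × ℝ} (hq : 0 ≤ q.1) :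
    0 ≤ polarDirichletDensity f q :=
  (by positivity : 0 ≤ deriv (fun r => f (r, q.2)) q.1 ^ 2 * q.1).trans
    (deriv_fst_sq_mul_le_polarDirichletDensity f hq)

section AngularMean

variable {f : ℝ × ℝ → ℝ} {r₀ θ₁ θ₂ : ℝ}

theorem integrableOn_sq_slice_snd (hf : ContinuousOn f (Ici r₀ ×ˢ Icc θ₁ θ₂)) {r : ℝ}
    (hr : r₀ ≤ r) : IntegrableOn (fun θ => f (r, θ) ^ 2) (Ioo θ₁ θ₂) :=
  ((hf.comp (continuous_const.prodMk continuous_id).continuousOn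
    fun _ hθ => ⟨hr, hθ⟩).pow 2).integrableOn_Icc.mono_set Ioo_subset_Icc_self

theorem contDiffOn_slice_fst (hf : ContDiffOn ℝ 1 f (Ici r₀ ×ˢ Icc θ₁ θ₂)) {θ : ℝ}
    (hθ : θ ∈ Icc θ₁ θ₂) : ContDiffOn ℝ 1 (fun r => f (r, θ)) (Ioi r₀) :=
  hf.comp (contDiff_id.prodMk contDiff_const).contDiffOn fun _ hr => ⟨Ioi_subset_Ici_self hr, hθ⟩

theorem sq_le_of_integrableOn_polarDirichletDensity_slice (hr₀ : 0 ≤ r₀)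
    (hf : ContDiffOn ℝ 1 f (Ici r₀ ×ˢ Icc θ₁ θ₂)) {s r θ : ℝ} (hs : r₀ < s) (hsr : s ≤ r)
    (hθ : θ ∈ Icc θ₁ θ₂)
    (hD : IntegrableOn (fun t => polarDirichletDensity f (t, θ)) (Ioi s)) :
    f (r, θ) ^ 2 ≤ 2 * f (s, θ) ^ 2
      + log (r / s) * (2 * ∫ t in Ioi s, polarDirichletDensity f (t, θ)) := by
  have hpos : ∀ t ∈ Ioi s, 0 ≤ t := fun t ht => (hr₀.trans hs.le).trans ht.le
  have hmono : ∫ t in s..r, deriv (fun r => f (r, θ)) t ^ 2 * t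
      ≤ ∫ t in Ioi s, polarDirichletDensity f (t, θ) :=
    calc ∫ t in s..r, deriv (fun r => f (r, θ)) t ^ 2 * t
        ≤ ∫ t in Ioc s r, polarDirichletDensity f (t, θ) := by
          rw [intervalIntegral.integral_of_le hsr]
          refine integral_mono_of_nonneg ?_ (hD.mono_set Ioc_subset_Ioi_self) ?_ <;>
            filter_upwards [self_mem_ae_restrict measurableSet_Ioc] with t ht
          · exact mul_nonneg (sq_nonneg _) (hpos t ht.1)
          · exact deriv_fst_sq_mul_le_polarDirichletDensity f (q := (t, θ)) (hpos t ht.1)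
      _ ≤ ∫ t in Ioi s, polarDirichletDensity f (t, θ) :=
          setIntegral_mono_set hD
            (ae_restrict_of_forall_mem measurableSet_Ioi fun t ht =>
              polarDirichletDensity_nonneg f (q := (t, θ)) (hpos t ht))
            Ioc_subset_Ioi_self.eventuallyLE
  have hlog : 0 ≤ log (r / s) := log_nonneg ((one_le_div (by linarith)).2 hsr)
  have := sq_le_two_mul_sq_add_log_div_mul_integral hr₀ hs hsr (contDiffOn_slice_fst hf hθ)
  nlinarith [mul_le_mul_of_nonneg_left hmono hlog]

theorem integral_sq_le_of_integrableOn_polarDirichletDensity (hr₀ : 0 ≤ r₀)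
    (hf : ContDiffOn ℝ 1 f (Ici r₀ ×ˢ Icc θ₁ θ₂))
    (hD : IntegrableOn (polarDirichletDensity f) (Ioi r₀ ×ˢ Ioo θ₁ θ₂)) {s r : ℝ}
    (hs : r₀ < s) (hsr : s ≤ r) :
    ∫ θ in Ioo θ₁ θ₂, f (r, θ) ^ 2 ≤ 2 * (∫ θ in Ioo θ₁ θ₂, f (s, θ) ^ 2)
      + log (r / s) * (2 * ∫ p in Ioi s ×ˢ Ioo θ₁ θ₂, polarDirichletDensity f p) := by
  have hDs : IntegrableOn (polarDirichletDensity f) (Ioi s ×ˢ Ioo θ₁ θ₂) (volume.prod volume) :=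
    hD.mono_set (prod_mono (Ioi_subset_Ioi hs.le) le_rfl)
  have hsq := integrableOn_sq_slice_snd hf.continuousOn hs.le
  have hG := hDs.integrableOn_setIntegral_left
  calc ∫ θ in Ioo θ₁ θ₂, f (r, θ) ^ 2
      ≤ ∫ θ in Ioo θ₁ θ₂, (2 * f (s, θ) ^ 2
          + log (r / s) * (2 * ∫ t in Ioi s, polarDirichletDensity f (t, θ))) := by
        refine setIntegral_mono_ae_restrict (integrableOn_sq_slice_snd hf.continuousOn
          (hs.le.trans hsr)) ((hsq.const_mul 2).add ((hG.const_mul 2).const_mul _)) ?_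
        filter_upwards [hDs.ae_integrableOn_left, self_mem_ae_restrict measurableSet_Ioo]
          with θ hDθ hθ
        exact sq_le_of_integrableOn_polarDirichletDensity_slice hr₀ hf hs hsr
          (Ioo_subset_Icc_self hθ) hDθ
    _ = _ := by
        rw [integral_add (hsq.const_mul 2) ((hG.const_mul 2).const_mul _), integral_const_mul,
          integral_const_mul, integral_const_mul, Measure.volume_eq_prod,
          setIntegral_prod_symm hDs]

end AngularMean

/-- Gilbarg–Weinberger type lemma on the exterior half-region, in polar
coordinates: finite Dirichlet integral implies the angular square mean is
`o(log r)`. -/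
theorem stmt_0 (r₀ : ℝ) (hr₀ : 0 < r₀) (f : ℝ × ℝ → ℝ)
    (hf : ContDiffOn ℝ 1 f (Ici r₀ ×ˢ Icc 0 π))
    (hDir : IntegrableOn
      (fun q : ℝ × ℝ =>
        ((deriv (fun r => f (r, q.2)) q.1) ^ 2
          + (deriv (fun θ => f (q.1, θ)) q.2) ^ 2 / q.1 ^ 2) * q.1)
      (Ioi r₀ ×ˢ Ioo 0 π)) :
    Tendsto (fun r : ℝ => (1 / Real.log r) * ∫ θ in (0:ℝ)..π, (f (r, θ)) ^ 2)
      atTop (nhds 0) := by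
  have hD : IntegrableOn (polarDirichletDensity f) (Ioi r₀ ×ˢ Ioo 0 π) := hDir
  have hIoo : ∀ r, ∫ θ in (0:ℝ)..π, f (r, θ) ^ 2 = ∫ θ in Ioo 0 π, f (r, θ) ^ 2 := fun r => by
    rw [intervalIntegral.integral_of_le pi_pos.le, integral_Ioc_eq_integral_Ioo]
  simp_rw [hIoo]
  refine tendsto_one_div_log_mul_of_le (A := fun s => 2 * ∫ θ in Ioo 0 π, f (s, θ) ^ 2)
    (T := fun s => 2 * ∫ p in Ioi s ×ˢ Ioo 0 π, polarDirichletDensity f p)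
    (.of_forall fun r => setIntegral_nonneg measurableSet_Ioo fun _ _ => sq_nonneg _)
    (by simpa using (tendsto_setIntegral_Ioi_prod_nhds_zero measurableSet_Ioo hD).const_mul 2)
    ?_
  filter_upwards [eventually_gt_atTop r₀] with s hs
  filter_upwards [eventually_ge_atTop s] with r hsr
  exact integral_sq_le_of_integrableOn_polarDirichletDensity hr₀.le hf hD hs hsr
end

section
/- Let p be C¹ on Ω₀ = {r > r₁, 0 < θ < π} (r₁ > max(r₀,1)) with ∫_{Ω₀} |∇p|²/log r dx dy < ∞. Then there exists a sequence Rₙ ∈ (2^{2ⁿ}, 2^{2ⁿ⁺¹}) such that ∫₀^π |p(Rₙ,θ) − p̄(Rₙ)|² dθ → 0 as n → ∞, where p̄(r) = (1/π)∫₀^π p(r,θ) dθ. -/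
/-!
Write `E(r) = ∫₀^π p_θ(r, θ)² dθ`. In polar coordinates the weighted Dirichlet integral dominates
`∫ E(r) / (r log r) dr`, so its part over the shell `2^{2ⁿ} < r < 2^{2ⁿ⁺¹}` tends to `0`; since
`∫ dr / (r log r) = log 2` over every such shell, some radius `Rₙ` in it has `E(Rₙ)` at most
about that part divided by `log 2`. The Poincaré inequality on `[0, π]`,
`∫₀^π |p − p̄|² ≤ π² E(r)`, then gives the claim; it holds because the mean minimises
`c ↦ ∫ (f − c)²`, and for `c = f(0)` Cauchy–Schwarz bounds `f(θ) − f(0) = ∫₀^θ f'`.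
-/

open MeasureTheory Real Filter Set Topology

namespace intervalIntegral

variable {f f' : ℝ → ℝ} {a b : ℝ}

theorem integral_sub_const_sq (hf : IntervalIntegrable f volume a b)
    (hf2 : IntervalIntegrable (fun x => f x ^ 2) volume a b) (c : ℝ) :
    ∫ x in a..b, (f x - c) ^ 2
      = (∫ x in a..b, f x ^ 2) - 2 * c * (∫ x in a..b, f x) + (b - a) * c ^ 2 := by
  have hexp : ∀ x, (f x - c) ^ 2 = f x ^ 2 - 2 * c * f x + c ^ 2 := fun x => by ring
  simp_rw [hexp]
  rw [integral_add (hf2.sub (hf.const_mul _)) intervalIntegrable_const,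
    integral_sub hf2 (hf.const_mul _), integral_const_mul, integral_const, smul_eq_mul]

theorem sq_integral_le_mul_integral_sq (hab : a ≤ b) (hf : IntervalIntegrable f volume a b)
    (hf2 : IntervalIntegrable (fun x => f x ^ 2) volume a b) :
    (∫ x in a..b, f x) ^ 2 ≤ (b - a) * ∫ x in a..b, f x ^ 2 := by
  rcases hab.eq_or_lt with rfl | hab
  · simp
  have hL : 0 < b - a := sub_pos.2 hab
  have h := integral_sub_const_sq hf hf2 ((∫ x in a..b, f x) / (b - a))
  have h0 : 0 ≤ ∫ x in a..b, (f x - (∫ x in a..b, f x) / (b - a)) ^ 2 :=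
    integral_nonneg hab.le fun _ _ => sq_nonneg _
  rw [h] at h0
  field_simp at h0
  nlinarith

theorem integral_sub_average_sq_le (hab : a ≤ b) (hf : IntervalIntegrable f volume a b)
    (hf2 : IntervalIntegrable (fun x => f x ^ 2) volume a b) (c : ℝ) :
    ∫ x in a..b, (f x - (1 / (b - a)) * ∫ y in a..b, f y) ^ 2 ≤ ∫ x in a..b, (f x - c) ^ 2 := by
  set m := (1 / (b - a)) * ∫ y in a..b, f y
  have hI : ∫ y in a..b, f y = (b - a) * m := by
    rcases hab.eq_or_lt with rfl | hab
    · simp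
    · simp only [m]; field_simp [(sub_pos.2 hab).ne']
  rw [integral_sub_const_sq hf hf2, integral_sub_const_sq hf hf2, hI]
  nlinarith [mul_nonneg (sub_nonneg.2 hab) (sq_nonneg (m - c))]

theorem sq_sub_le_mul_integral_deriv_sq (hab : a ≤ b) (hf : ContinuousOn f (Icc a b))
    (hf' : ContinuousOn f' (Icc a b)) (hderiv : ∀ x ∈ Ioo a b, HasDerivAt f (f' x) x)
    {x : ℝ} (hx : x ∈ Icc a b) :
    (f x - f a) ^ 2 ≤ (b - a) * ∫ y in a..b, f' y ^ 2 := by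
  have hf'x : ContinuousOn f' (Icc a x) := hf'.mono (Icc_subset_Icc_right hx.2)
  have hFTC : ∫ y in a..x, f' y = f x - f a :=
    integral_eq_sub_of_hasDeriv_right_of_le hx.1 (hf.mono (Icc_subset_Icc_right hx.2))
      (fun y hy => (hderiv y ⟨hy.1, hy.2.trans_le hx.2⟩).hasDerivWithinAt)
      (hf'x.intervalIntegrable_of_Icc hx.1)
  calc (f x - f a) ^ 2 = (∫ y in a..x, f' y) ^ 2 := by rw [hFTC]
    _ ≤ (x - a) * ∫ y in a..x, f' y ^ 2 :=
      sq_integral_le_mul_integral_sq hx.1 (hf'x.intervalIntegrable_of_Icc hx.1)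
        ((hf'x.pow 2).intervalIntegrable_of_Icc hx.1)
    _ ≤ (b - a) * ∫ y in a..b, f' y ^ 2 := by
      gcongr
      · exact integral_nonneg hx.1 fun _ _ => sq_nonneg _
      · exact hx.2
      · exact integral_mono_interval le_rfl hx.1 hx.2 (Eventually.of_forall fun _ => sq_nonneg _)
          ((hf'.pow 2).intervalIntegrable_of_Icc hab)

theorem integral_sub_average_sq_le_of_hasDerivAt (hab : a ≤ b)
    (hf : ContinuousOn f (Icc a b)) (hf' : ContinuousOn f' (Icc a b))
    (hderiv : ∀ x ∈ Ioo a b, HasDerivAt f (f' x) x) :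
    ∫ x in a..b, (f x - (1 / (b - a)) * ∫ y in a..b, f y) ^ 2
      ≤ (b - a) ^ 2 * ∫ y in a..b, f' y ^ 2 :=
  calc _ ≤ ∫ x in a..b, (f x - f a) ^ 2 :=
        integral_sub_average_sq_le hab (hf.intervalIntegrable_of_Icc hab)
          ((hf.pow 2).intervalIntegrable_of_Icc hab) (f a)
    _ ≤ ∫ _ in a..b, (b - a) * ∫ y in a..b, f' y ^ 2 :=
        integral_mono_on hab (((hf.sub continuousOn_const).pow 2).intervalIntegrable_of_Icc hab)
          intervalIntegrable_const fun x hx => sq_sub_le_mul_integral_deriv_sq hab hf hf' hderiv hx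
    _ = (b - a) ^ 2 * ∫ y in a..b, f' y ^ 2 := by rw [integral_const, smul_eq_mul]; ring

end intervalIntegral

theorem continuousOn_inv_mul_log : ContinuousOn (fun r : ℝ => (r * log r)⁻¹) (Ioi 1) :=
  (continuousOn_id.mul (continuousOn_log.mono fun _ hr => (zero_lt_one.trans hr).ne')).inv₀
    fun _ hr => (mul_pos (zero_lt_one.trans hr) (log_pos hr)).ne'

theorem integral_inv_mul_log_sq {A : ℝ} (hA : 1 < A) : ∫ r in A..A ^ 2, (r * log r)⁻¹ = log 2 := by
  have hAA : A ≤ A ^ 2 := by nlinarith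
  have hsub : uIcc A (A ^ 2) ⊆ Ioi 1 := by
    rw [uIcc_of_le hAA]; exact fun _ hr => hA.trans_le hr.1
  have hderiv : ∀ r ∈ uIcc A (A ^ 2), HasDerivAt (fun r => log (log r)) (r * log r)⁻¹ r := by
    intro r hr
    have hr1 : 1 < r := hsub hr
    convert (hasDerivAt_log (zero_lt_one.trans hr1).ne').log (log_pos hr1).ne' using 1
    field_simp
  rw [intervalIntegral.integral_eq_sub_of_hasDerivAt hderiv
    (continuousOn_inv_mul_log.mono hsub).intervalIntegrable, log_pow, Nat.cast_ofNat,
    log_mul two_ne_zero (log_pos hA).ne', add_sub_cancel_right]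

theorem exists_mem_Ioo_sq_le_of_integral_lt {h : ℝ → ℝ} {A c : ℝ} (hA : 1 < A)
    (hint : IntervalIntegrable (fun r => h r / (r * log r)) volume A (A ^ 2))
    (hc : ∫ r in A..A ^ 2, h r / (r * log r) < c * log 2) : ∃ r ∈ Ioo A (A ^ 2), h r ≤ c := by
  by_contra! hlt
  have hAA : A ≤ A ^ 2 := by nlinarith
  have hsub : uIcc A (A ^ 2) ⊆ Ioi 1 := by
    rw [uIcc_of_le hAA]; exact fun _ hr => hA.trans_le hr.1
  refine hc.not_ge ?_
  calc c * log 2 = ∫ r in A..A ^ 2, c * (r * log r)⁻¹ := by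
        rw [intervalIntegral.integral_const_mul, integral_inv_mul_log_sq hA]
    _ ≤ ∫ r in A..A ^ 2, h r / (r * log r) := by
        refine intervalIntegral.integral_mono_on_of_le_Ioo hAA
          ((continuousOn_inv_mul_log.mono hsub).intervalIntegrable.const_mul c) hint fun r hr => ?_
        have hr1 : 1 < r := hA.trans hr.1
        rw [← div_eq_mul_inv]
        exact div_le_div_of_nonneg_right (hlt r hr).le
          (mul_pos (zero_lt_one.trans hr1) (log_pos hr1)).le

theorem tendsto_integral_succ_of_integrableOn_Ioi {k : ℝ → ℝ} {r₁ : ℝ}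
    (hk : IntegrableOn k (Ioi r₁)) {b : ℕ → ℝ} (hb : Tendsto b atTop atTop) :
    Tendsto (fun n => ∫ x in b n..b (n + 1), k x) atTop (𝓝 0) := by
  have hb' : Tendsto (fun n => b (n + 1)) atTop atTop := hb.comp (tendsto_add_atTop_nat 1)
  have hint : ∀ t, r₁ ≤ t → IntervalIntegrable k volume r₁ t := fun t ht =>
    (intervalIntegrable_iff_integrableOn_Ioc_of_le ht).2 (hk.mono_set Ioc_subset_Ioi_self)
  have hlim := ((intervalIntegral_tendsto_integral_Ioi r₁ hk hb').sub
    (intervalIntegral_tendsto_integral_Ioi r₁ hk hb))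
  rw [sub_self] at hlim
  refine hlim.congr' ?_
  filter_upwards [hb.eventually_ge_atTop r₁, hb'.eventually_ge_atTop r₁] with n hn hn'
  exact intervalIntegral.integral_interval_sub_left (hint _ hn') (hint _ hn)

theorem tendsto_two_pow_two_pow_atTop : Tendsto (fun n : ℕ => (2 : ℝ) ^ 2 ^ n) atTop atTop :=
  (tendsto_pow_atTop_atTop_of_one_lt one_lt_two).comp
    (tendsto_pow_atTop_atTop_of_one_lt one_lt_two)

theorem exists_seq_mem_Ioo_two_pow_tendsto_zero {h : ℝ → ℝ} {r₁ : ℝ} (hh : ∀ r, 0 ≤ h r)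
    (hint : IntegrableOn (fun r => h r / (r * log r)) (Ioi r₁)) :
    ∃ R : ℕ → ℝ, (∀ n, R n ∈ Ioo ((2 : ℝ) ^ 2 ^ n) (2 ^ 2 ^ (n + 1))) ∧
      Tendsto (fun n => h (R n)) atTop (𝓝 0) := by
  set a : ℕ → ℝ := fun n => 2 ^ 2 ^ n
  have ha_sq : ∀ n, a (n + 1) = a n ^ 2 := fun n => by simp only [a, pow_succ, pow_mul]
  have ha_one : ∀ n, 1 < a n := fun n => one_lt_pow₀ one_lt_two (pow_ne_zero n two_ne_zero)
  set δ : ℕ → ℝ := fun n => ∫ r in a n..a (n + 1), h r / (r * log r)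
  -- the slack `1 / (n + 1)` stands in for a mean value theorem, which would need `h` continuous
  set c : ℕ → ℝ := fun n => (δ n + 1 / ((n : ℝ) + 1)) / log 2
  have hlog2 : 0 < log 2 := log_pos one_lt_two
  have hsel : ∀ n, ∃ r ∈ Ioo (a n) (a (n + 1)), r₁ ≤ a n → h r ≤ c n := by
    intro n
    by_cases hn : r₁ ≤ a n
    · have hint_n : IntervalIntegrable (fun r => h r / (r * log r)) volume (a n) (a n ^ 2) :=
        (intervalIntegrable_iff_integrableOn_Ioc_of_le (by nlinarith [ha_one n])).2
          (hint.mono_set fun _ hr => hn.trans_lt hr.1)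
      have hδc : ∫ r in a n..a n ^ 2, h r / (r * log r) < c n * log 2 := by
        rw [div_mul_cancel₀ _ hlog2.ne', ← ha_sq]
        exact lt_add_of_pos_right _ Nat.one_div_pos_of_nat
      rw [ha_sq]
      obtain ⟨r, hr, hrc⟩ := exists_mem_Ioo_sq_le_of_integral_lt (ha_one n) hint_n hδc
      exact ⟨r, hr, fun _ => hrc⟩
    · obtain ⟨r, hr⟩ := exists_between (show a n < a (n + 1) by rw [ha_sq]; nlinarith [ha_one n])
      exact ⟨r, hr, fun hn' => absurd hn' hn⟩
  choose R hR hRc using hsel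
  have hc : Tendsto c atTop (𝓝 0) := by
    have := ((tendsto_integral_succ_of_integrableOn_Ioi hint tendsto_two_pow_two_pow_atTop).add
      tendsto_one_div_add_atTop_nhds_zero_nat).div_const (log 2)
    rwa [zero_add, zero_div] at this
  refine ⟨R, hR, squeeze_zero' (.of_forall fun n => hh _) ?_ hc⟩
  filter_upwards [tendsto_two_pow_two_pow_atTop.eventually_ge_atTop r₁] with n hn
  exact hRc n hn

theorem ContDiffOn.continuousOn_deriv_snd {E F : Type*} [NormedAddCommGroup E] [NormedSpace ℝ E]
    [NormedAddCommGroup F] [NormedSpace ℝ F] {p : E × ℝ → F} {U : Set (E × ℝ)} (hU : IsOpen U)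
    (hp : ContDiffOn ℝ 1 p U) :
    ContinuousOn (fun q : E × ℝ => deriv (fun θ => p (q.1, θ)) q.2) U := by
  refine ((hp.continuousOn_fderiv_of_isOpen hU le_rfl).clm_apply
    (continuousOn_const (c := ((0 : E), (1 : ℝ))))).congr fun q hq => ?_
  have hpq : HasFDerivAt p (fderiv ℝ p q) (q.1, q.2) :=
    ((hp.differentiableOn one_ne_zero q hq).differentiableAt (hU.mem_nhds hq)).hasFDerivAt
  exact (hpq.comp_hasDerivAt q.2 ((hasDerivAt_const q.2 q.1).prodMk (hasDerivAt_id q.2))).deriv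

noncomputable def angularEnergy (p : ℝ × ℝ → ℝ) (r : ℝ) : ℝ :=
  ∫ θ in (0 : ℝ)..π, deriv (fun θ => p (r, θ)) θ ^ 2

theorem angularEnergy_nonneg (p : ℝ × ℝ → ℝ) (r : ℝ) : 0 ≤ angularEnergy p r :=
  intervalIntegral.integral_nonneg pi_pos.le fun _ _ => sq_nonneg _

theorem integrableOn_angularEnergy_div_mul_log {p : ℝ × ℝ → ℝ} {r₁ : ℝ} (hr₁ : 1 ≤ r₁)
    (hp : ContDiffOn ℝ 1 p (Ioi r₁ ×ˢ Ioo 0 π))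
    (hDir : IntegrableOn
      (fun q : ℝ × ℝ =>
        ((deriv (fun r => p (r, q.2)) q.1) ^ 2
          + (deriv (fun θ => p (q.1, θ)) q.2) ^ 2 / q.1 ^ 2) * q.1 / log q.1)
      (Ioi r₁ ×ˢ Ioo 0 π)) :
    IntegrableOn (fun r => angularEnergy p r / (r * log r)) (Ioi r₁) := by
  set W : ℝ × ℝ → ℝ := fun q => deriv (fun θ => p (q.1, θ)) q.2 ^ 2 / (q.1 * log q.1)
  have hU : IsOpen (Ioi r₁ ×ˢ Ioo (0 : ℝ) π) := isOpen_Ioi.prod isOpen_Ioo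
  have hW_meas : AEStronglyMeasurable W (volume.restrict (Ioi r₁ ×ˢ Ioo 0 π)) := by
    refine ContinuousOn.aestronglyMeasurable ?_ hU.measurableSet
    refine ((hp.continuousOn_deriv_snd hU).pow 2).div
      (continuousOn_fst.mul (continuousOn_fst.log fun q hq => ?_)) fun q hq => ?_
    · exact (zero_lt_one.trans (hr₁.trans_lt hq.1)).ne'
    · have hq1 : 1 < q.1 := hr₁.trans_lt hq.1
      exact (mul_pos (zero_lt_one.trans hq1) (log_pos hq1)).ne'
  have hW : IntegrableOn W (Ioi r₁ ×ˢ Ioo 0 π) := by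
    refine hDir.mono' hW_meas ((ae_restrict_iff' hU.measurableSet).2 (.of_forall fun q hq => ?_))
    have hq1 : 1 < q.1 := hr₁.trans_lt hq.1
    have hq0 : 0 < q.1 := zero_lt_one.trans hq1
    have hlog : 0 < log q.1 := log_pos hq1
    rw [norm_of_nonneg (by positivity)]
    calc W q ≤ deriv (fun r => p (r, q.2)) q.1 ^ 2 * q.1 / log q.1 + W q :=
          le_add_of_nonneg_left (by positivity)
      _ = _ := by simp only [W]; field_simp
  rw [IntegrableOn, Measure.volume_eq_prod, ← Measure.prod_restrict] at hW
  refine hW.integral_prod_left.congr (.of_forall fun r => ?_)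
  simp only [W, angularEnergy, integral_div, intervalIntegral.integral_of_le pi_pos.le,
    integral_Ioc_eq_integral_Ioo]

theorem ContDiffOn.integral_sub_average_sq_le {f : ℝ → ℝ} {a b : ℝ} (hab : a ≤ b)
    (hf : ContDiffOn ℝ 1 f (Icc a b)) :
    ∫ x in a..b, (f x - (1 / (b - a)) * ∫ y in a..b, f y) ^ 2
      ≤ (b - a) ^ 2 * ∫ x in a..b, deriv f x ^ 2 := by
  rcases hab.eq_or_lt with rfl | hab
  · simp
  have hderiv : ∀ x ∈ Ioo a b, HasDerivAt f (derivWithin f (Icc a b) x) x := fun x hx => by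
    rw [derivWithin_of_mem_nhds (Icc_mem_nhds hx.1 hx.2)]
    exact ((hf.differentiableOn one_ne_zero).differentiableAt (Icc_mem_nhds hx.1 hx.2)).hasDerivAt
  have key := intervalIntegral.integral_sub_average_sq_le_of_hasDerivAt hab.le hf.continuousOn
    (hf.continuousOn_derivWithin (uniqueDiffOn_Icc hab) le_rfl) hderiv
  calc _ ≤ (b - a) ^ 2 * ∫ x in a..b, derivWithin f (Icc a b) x ^ 2 := key
    _ = (b - a) ^ 2 * ∫ x in a..b, deriv f x ^ 2 := by
      simp only [intervalIntegral.integral_of_le hab.le, integral_Ioc_eq_integral_Ioo]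
      congr 1
      exact setIntegral_congr_fun measurableSet_Ioo fun x hx => by
        rw [derivWithin_of_mem_nhds (Icc_mem_nhds hx.1 hx.2)]

/-- Selection of radii `Rₙ ∈ (2^{2ⁿ}, 2^{2ⁿ⁺¹})` along which the angular
L² oscillation of the pressure tends to zero, under the weighted Dirichlet
bound `∫ |∇p|²/log r < ∞` (polar coordinates). -/
theorem stmt_9 (r₀ r₁ : ℝ) (hr₁ : max r₀ 1 < r₁) (p : ℝ × ℝ → ℝ)
    (hp : ContDiffOn ℝ 1 p (Ici r₁ ×ˢ Icc 0 π))
    (hDir : IntegrableOn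
      (fun q : ℝ × ℝ =>
        ((deriv (fun r => p (r, q.2)) q.1) ^ 2
          + (deriv (fun θ => p (q.1, θ)) q.2) ^ 2 / q.1 ^ 2) * q.1
          / Real.log q.1)
      (Ioi r₁ ×ˢ Ioo 0 π)) :
    ∃ R : ℕ → ℝ,
      (∀ n : ℕ, R n ∈ Ioo ((2:ℝ) ^ (2 ^ n)) ((2:ℝ) ^ (2 ^ (n + 1)))) ∧
      Tendsto (fun n : ℕ => ∫ θ in (0:ℝ)..π,
          (p (R n, θ) - (1 / π) * ∫ φ in (0:ℝ)..π, p (R n, φ)) ^ 2)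
        atTop (nhds 0) := by
  have hr₁_one : 1 < r₁ := (le_max_right r₀ 1).trans_lt hr₁
  have hslice : ∀ r, r₁ ≤ r → ContDiffOn ℝ 1 (fun θ => p (r, θ)) (Icc 0 π) := fun r hr =>
    hp.comp (contDiff_const.prodMk contDiff_id).contDiffOn fun θ hθ => ⟨hr, hθ⟩
  obtain ⟨R, hR, hlim⟩ := exists_seq_mem_Ioo_two_pow_tendsto_zero
    (angularEnergy_nonneg p) (integrableOn_angularEnergy_div_mul_log hr₁_one.le
      (hp.mono (prod_mono Ioi_subset_Ici_self Ioo_subset_Icc_self)) hDir)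
  refine ⟨R, hR, squeeze_zero'
    (.of_forall fun n => intervalIntegral.integral_nonneg pi_pos.le fun _ _ => sq_nonneg _) ?_
    (by simpa using hlim.const_mul (π ^ 2))⟩
  filter_upwards [tendsto_two_pow_two_pow_atTop.eventually_ge_atTop r₁] with n hn
  simpa [angularEnergy] using
    (hslice (R n) (hn.trans (hR n).1.le)).integral_sub_average_sq_le pi_pos.le
end
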